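/- arXiv:1810.04306 — 4 statements merged into one kernel-verified Lean document; each statement's English description precedes it below -/
import Mathlib

section
/- For every abelian category A, no point of the atom spectrum ASpec A (with the localizing topology) is a limit point of its own closure; that is, for every atom α, α ∉ closure( closure({α}) ∖ {α} ). -/
/-!
Let `α` be the atom of a monoform `H`. The open set `ASupp H` contains `α`, so a point
`β ≠ α` of `closure {α}` lying in it is the atom of a monoform quotient `L / K` of some
`L ≤ H`. If `K = 0` then `L / K ≅ L` and `β = α`. Otherwise `β ∈ closure {α}` forces
`α ∈ ASupp (L / K)`: some subquotient of `L / K` has a nonzero subobject isomorphic to a nonzero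
`N ≤ H`. Pulling this back along `L → L / K` yields `L₀ ≤ H` and an epimorphism `L₀ → N`
whose kernel contains `K ≠ 0`, which monoformity of `H` forbids.
-/

universe w v u

open CategoryTheory CategoryTheory.Limits

noncomputable section

namespace AtomSpectrum

def IsQuotientOf {C : Type u} [Category.{v} C] [Abelian C] (N M : C) : Prop :=
  ∃ f : M ⟶ N, Epi f

def IsSubquotientOf {C : Type u} [Category.{v} C] [Abelian C] (N M : C) : Prop :=
  ∃ L : Subobject M, IsQuotientOf N (L : C)

/-- A monoform object: a nonzero object `H` such that for no subobjects
`0 ≠ L' ⊊ L ⊆ H` and `0 ≠ N ⊆ H` is `L/L'` isomorphic to `N`. -/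
def IsMonoform {C : Type u} [Category.{v} C] [Abelian C] (H : C) : Prop :=
  ¬ IsZero H ∧
    ∀ (L : Subobject H) (L' : Subobject (L : C)) (N : Subobject H),
      L' ≠ ⊥ → L' ≠ ⊤ → N ≠ ⊥ → IsEmpty (cokernel L'.arrow ≅ (N : C))

structure MonoformObject (C : Type u) [Category.{v} C] [Abelian C] where
  obj : C
  monoform : IsMonoform obj

variable {C : Type u} [Category.{v} C] [Abelian C]

/-- Atom equivalence: two monoform objects have isomorphic nonzero subobjects. -/
def AtomEquiv (H₁ H₂ : MonoformObject C) : Prop :=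
  ∃ (L₁ : Subobject H₁.obj) (L₂ : Subobject H₂.obj),
    L₁ ≠ ⊥ ∧ L₂ ≠ ⊥ ∧ Nonempty ((L₁ : C) ≅ (L₂ : C))

/-- The atom spectrum of an abelian category. -/
def ASpec (C : Type u) [Category.{v} C] [Abelian C] : Type u :=
  Quot (AtomEquiv (C := C))

def MonoformObject.atom (H : MonoformObject C) : ASpec C := Quot.mk _ H

/-- The atom support of an object. -/
def ASupp (M : C) : Set (ASpec C) :=
  {α | ∃ H : MonoformObject C, H.atom = α ∧ IsSubquotientOf H.obj M}

/-- The localizing topology on the atom spectrum, with open basis the atom supports. -/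
instance : TopologicalSpace (ASpec C) :=
  TopologicalSpace.generateFrom {U | ∃ M : C, U = ASupp M}


namespace Subobject

variable {X Y : C}

lemma mk_eq_bot_iff_isZero (f : X ⟶ Y) [Mono f] : Subobject.mk f = ⊥ ↔ IsZero X :=
  Subobject.mk_eq_bot_iff_zero.trans ⟨IsZero.of_mono_eq_zero f, fun h => h.eq_of_src _ _⟩

lemma eq_bot_iff_isZero (P : Subobject Y) : P = ⊥ ↔ IsZero (P : C) := by
  simpa only [Subobject.mk_arrow] using mk_eq_bot_iff_isZero P.arrow

lemma top_ne_bot_of_not_isZero (h : ¬ IsZero Y) : (⊤ : Subobject Y) ≠ ⊥ := fun h' =>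
  h (((eq_bot_iff_isZero _).1 h').of_iso (asIso (⊤ : Subobject Y).arrow).symm)

lemma mono_biprod_desc_arrow_of_inf_eq_bot {A B : Subobject Y} (h : A ⊓ B = ⊥) :
    Mono (biprod.desc A.arrow B.arrow) := by
  refine Preadditive.mono_of_cancel_zero _ fun u hu => ?_
  have hsum : (u ≫ biprod.fst) ≫ A.arrow = (-(u ≫ biprod.snd)) ≫ B.arrow := by
    rw [biprod.desc_eq, Preadditive.comp_add] at hu
    simpa only [Preadditive.neg_comp, Category.assoc] using eq_neg_of_add_eq_zero_left hu
  have hA : u ≫ biprod.fst = 0 := by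
    have hfac : (A ⊓ B).Factors ((u ≫ biprod.fst) ≫ A.arrow) :=
      (Subobject.inf_factors _).2 ⟨Subobject.factors_comp_arrow _,
        hsum ▸ Subobject.factors_comp_arrow _⟩
    rw [h, Subobject.bot_factors_iff_zero] at hfac
    exact (cancel_mono A.arrow).1 (by rw [hfac, zero_comp])
  have hB : u ≫ biprod.snd = 0 := by
    rw [hA, zero_comp, eq_comm, Preadditive.neg_comp, neg_eq_zero] at hsum
    exact (cancel_mono B.arrow).1 (by rw [hsum, zero_comp])
  exact biprod.hom_ext _ _ (by rw [hA, zero_comp]) (by rw [hB, zero_comp])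

end Subobject

lemma mono_of_mono_pullback_snd {X Y Z : C} (f : X ⟶ Y) (g : Z ⟶ Y)
    [Mono (pullback.snd f g)] : Mono f := by
  let u : kernel f ⟶ pullback f g := pullback.lift (kernel.ι f) 0 (by simp)
  have hu : u = 0 := (cancel_mono (pullback.snd f g)).1 (by rw [pullback.lift_snd, zero_comp])
  have hι : kernel.ι f = u ≫ pullback.fst f g := (pullback.lift_fst _ _ _).symm
  exact Abelian.mono_of_kernel_ι_eq_zero f (by rw [hι, hu, zero_comp])

namespace IsMonoform

variable {H : C}

/-- A non-monic `ψ` would exhibit `N ≅ P / ker ψ` with `0 ≠ ker ψ ⊊ P ≤ H`. -/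
lemma mono_of_epi (hH : IsMonoform H) {P : C} (m : P ⟶ H) [Mono m] (N : Subobject H)
    (hN : N ≠ ⊥) (ψ : P ⟶ (N : C)) [Epi ψ] : Mono ψ := by
  by_contra hψ
  let K : Subobject (Subobject.mk m : C) :=
    Subobject.mk (kernel.ι ψ ≫ (Subobject.underlyingIso m).inv)
  have hK_bot : K ≠ ⊥ := by
    rw [Ne, Subobject.mk_eq_bot_iff_isZero]
    exact fun hz => hψ (Preadditive.mono_of_isZero_kernel ψ hz)
  have e : cokernel K.arrow ≅ (N : C) :=
    (cokernelEpiComp (Subobject.underlyingIso _).inv K.arrow).symm ≪≫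
      cokernelIsoOfEq (Subobject.underlyingIso_arrow _) ≪≫
      cokernelCompIsIso (kernel.ι ψ) (Subobject.underlyingIso m).inv ≪≫
      asIso (Abelian.factorThruCoimage ψ)
  have hK_top : K ≠ ⊤ := by
    intro htop
    have : IsIso K.arrow := (Subobject.isIso_arrow_iff_eq_top K).2 htop
    exact hN ((Subobject.eq_bot_iff_isZero N).2
      ((isZero_cokernel_of_epi K.arrow).of_iso e.symm))
  exact (hH.2 _ K N hK_bot hK_top hN).false e

/-- If `A ⊓ B = ⊥` then `A ⊞ B ≤ H`, and `biprod.snd` is a non-monic epi onto `B`. -/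
lemma inf_ne_bot (hH : IsMonoform H) {A B : Subobject H} (hA : A ≠ ⊥) (hB : B ≠ ⊥) :
    A ⊓ B ≠ ⊥ := by
  intro h
  have := Subobject.mono_biprod_desc_arrow_of_inf_eq_bot h
  have := hH.mono_of_epi (biprod.desc A.arrow B.arrow) B hB
    (biprod.snd : (A : C) ⊞ (B : C) ⟶ _)
  have hinl : (biprod.inl : (A : C) ⟶ (A : C) ⊞ (B : C)) = 0 :=
    (cancel_mono biprod.snd).1 (by rw [biprod.inl_snd, zero_comp])
  exact hA ((Subobject.eq_bot_iff_isZero A).2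
    ((IsZero.iff_isSplitMono_eq_zero biprod.inl).2 hinl))

end IsMonoform

namespace MonoformObject

lemma atomEquiv_equivalence : Equivalence (AtomEquiv (C := C)) := by
  refine ⟨fun H => ?_, fun ⟨L₁, L₂, h₁, h₂, ⟨e⟩⟩ => ⟨L₂, L₁, h₂, h₁, ⟨e.symm⟩⟩, ?_⟩
  · have h := Subobject.top_ne_bot_of_not_isZero H.monoform.1
    exact ⟨⊤, ⊤, h, h, ⟨Iso.refl _⟩⟩
  · rintro H₁ H₂ H₃ ⟨A₁, A₂, -, hA₂, ⟨e⟩⟩ ⟨B₂, B₃, hB₂, -, ⟨e'⟩⟩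
    have hne : ¬ IsZero ((A₂ ⊓ B₂ : Subobject H₂.obj) : C) :=
      (Subobject.eq_bot_iff_isZero _).not.1 (H₂.monoform.inf_ne_bot hA₂ hB₂)
    let m₁ := Subobject.ofLE (A₂ ⊓ B₂) _ inf_le_left ≫ e.inv ≫ A₁.arrow
    let m₃ := Subobject.ofLE (A₂ ⊓ B₂) _ inf_le_right ≫ e'.hom ≫ B₃.arrow
    exact ⟨Subobject.mk m₁, Subobject.mk m₃,
      (Subobject.mk_eq_bot_iff_isZero m₁).not.2 hne,
      (Subobject.mk_eq_bot_iff_isZero m₃).not.2 hne,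
      ⟨Subobject.underlyingIso m₁ ≪≫ (Subobject.underlyingIso m₃).symm⟩⟩

lemma atomEquiv_of_atom_eq {H₁ H₂ : MonoformObject C} (h : H₁.atom = H₂.atom) :
    AtomEquiv H₁ H₂ :=
  atomEquiv_equivalence.eqvGen_iff.1 (Quot.eqvGen_exact h)

lemma atom_eq_of_iso {H H' : MonoformObject C} {L : Subobject H.obj} (e : (L : C) ≅ H'.obj) :
    H'.atom = H.atom := by
  have hL : L ≠ ⊥ :=
    (Subobject.eq_bot_iff_isZero L).not.2 fun hz => H'.monoform.1 (hz.of_iso e.symm)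
  exact Quot.sound ⟨⊤, L, Subobject.top_ne_bot_of_not_isZero H'.monoform.1, hL,
    ⟨asIso (⊤ : Subobject H'.obj).arrow ≪≫ e.symm⟩⟩

lemma atom_mem_aSupp (H : MonoformObject C) : H.atom ∈ ASupp H.obj :=
  ⟨H, rfl, ⊤, (⊤ : Subobject H.obj).arrow, inferInstance⟩

end MonoformObject

lemma isOpen_aSupp (M : C) : IsOpen (ASupp M) :=
  TopologicalSpace.isOpen_generateFrom_of_mem ⟨M, rfl⟩

lemma exists_mono_epi_not_mono_of_subquotient {X Q Q' : C} (f : X ⟶ Q) [Epi f]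
    (hf : ¬ Mono f) (S : Subobject Q) (g : (S : C) ⟶ Q') [Epi g] (N : Subobject Q') :
    ∃ (P : C) (m : P ⟶ X) (ψ : P ⟶ (N : C)), Mono m ∧ Epi ψ ∧ ¬ Mono ψ := by
  let φ := pullback.snd f S.arrow ≫ g
  have hφ : ¬ Mono φ := fun _ =>
    have := mono_of_mono (pullback.snd f S.arrow) g
    hf (mono_of_mono_pullback_snd f S.arrow)
  exact ⟨_, pullback.fst φ N.arrow ≫ pullback.fst f S.arrow, pullback.snd φ N.arrow,
    inferInstance, inferInstance, fun _ => hφ (mono_of_mono_pullback_snd φ N.arrow)⟩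

lemma MonoformObject.atom_notMem_aSupp_of_not_mono (H : MonoformObject C)
    (L : Subobject H.obj) {Q : C} (f : (L : C) ⟶ Q) [Epi f] (hf : ¬ Mono f) :
    H.atom ∉ ASupp Q := by
  rintro ⟨H'', hH'', S, g, hg⟩
  obtain ⟨N₁, N₂, -, hN₂, ⟨e⟩⟩ := atomEquiv_of_atom_eq hH''
  obtain ⟨P, m, ψ, hm, hψ, hψ'⟩ := exists_mono_epi_not_mono_of_subquotient f hf S g N₁
  have := H.monoform.mono_of_epi (m ≫ L.arrow) N₂ hN₂ (ψ ≫ e.hom)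
  exact hψ' (mono_of_mono ψ e.hom)

/-- In the atom spectrum of an abelian category (with the localizing topology), no point is
a limit point of its own closure. -/
theorem aspec_not_limitPt_of_closure (C : Type u) [Category.{v} C] [Abelian C]
    (α : ASpec C) : α ∉ closure (closure {α} \ {α}) := by
  intro hα
  obtain ⟨H, rfl⟩ := Quot.exists_rep α
  obtain ⟨_, ⟨H', rfl, L, f, hf⟩, hspec, hne⟩ :=
    mem_closure_iff.1 hα _ (isOpen_aSupp H.obj) H.atom_mem_aSupp
  by_cases hmono : Mono f
  · have := isIso_of_mono_of_epi f
    exact hne (MonoformObject.atom_eq_of_iso (asIso f))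
  · exact H.atom_notMem_aSupp_of_not_mono L f hmono
      ((specializes_iff_mem_closure.2 hspec).mem_open (isOpen_aSupp _) H'.atom_mem_aSupp)

end AtomSpectrum

end
end

section
/- Let X be the topological space with underlying set {x_i : i ∈ ℕ ∪ {∞}} (points pairwise distinct) whose nonempty open subsets are exactly the sets U_j = {x_i : j ≤ i} for j ∈ ℕ (where ∞ is larger than every integer). Then: (1) X is a noetherian topological space, so every subset of X is quasi-compact; (2) X is a spectral space; (3) x_∞ is a limit point of the closure of {x_∞}, the set L({x_∞}) of limit points of {x_∞} equals X ∖ {x_∞} and is not closed, and L(closure({x_∞})) = X ≠ L({x_∞}). -/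
noncomputable section

/-- The set of limit points of `S`: the points `x` lying in the closure of `S \ {x}`. -/
def limitPts {X : Type*} [TopologicalSpace X] (S : Set X) : Set X :=
  {x | x ∈ closure (S \ {x})}

/-- A spectral space: Kolmogorov, quasi-compact, quasi-compact open subsets closed under
finite intersection and forming an open basis, and sober. -/
structure IsSpectralSpace (X : Type*) [TopologicalSpace X] : Prop where
  t0 : T0Space X
  compactSpace : CompactSpace X
  isCompact_inter : ∀ U V : Set X, IsOpen U → IsCompact U → IsOpen V → IsCompact V →
    IsCompact (U ∩ V)
  isBasis_compact_open : TopologicalSpace.IsTopologicalBasis {U : Set X | IsOpen U ∧ IsCompact U}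
  sober : QuasiSober X

/-- The points `x_i`, `i ∈ ℕ ∪ {∞}` (pairwise distinct by construction). -/
inductive SeqPt : Type where
  | fin : ℕ → SeqPt
  | inf : SeqPt

/-- The set `U_j = {x_i : j ≤ i}` (where `∞` is larger than every integer). -/
def SeqPt.U (j : ℕ) : Set SeqPt :=
  {x | x = SeqPt.inf ∨ ∃ i : ℕ, x = SeqPt.fin i ∧ j ≤ i}

/-- The topology on `{x_i : i ∈ ℕ ∪ {∞}}` whose nonempty open subsets are exactly the
sets `U_j`, `j ∈ ℕ`.  (The family `{U_j}` contains the whole space and is closed under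
finite intersections and arbitrary nonempty unions, so the generated topology has exactly
`∅` and the `U_j` as open sets.) -/
instance : TopologicalSpace SeqPt :=
  TopologicalSpace.generateFrom {U | ∃ j : ℕ, U = SeqPt.U j}

/-!
Since `U_0 = X` and the `U_j` decrease, the opens of `X` are exactly `∅` and the `U_j`. Every
nonempty open contains `x_∞`, so `x_∞` is a generic point of `X`; the other nonempty closed sets
are the segments `{x_i : i ≤ n}`, the closures of the `x_n`, so `X` is sober and T0.
`U_j` is the set of generalizations of `x_j`, hence compact, so `X` is noetherian, and a noetherian
sober T0 space is spectral. Finally `{x_∞}` is dense, while no singleton is open since every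
`U_j` contains both `x_j` and `x_∞`; this computes the limit points.
-/

open Set Topology TopologicalSpace

section

variable {X : Type*}

theorem isOpen_generateFrom_antitone_iff {f : ℕ → Set X} (hf : Antitone f) (h0 : f 0 = univ)
    {V : Set X} : IsOpen[generateFrom {s | ∃ j, s = f j}] V ↔ V = ∅ ∨ ∃ j, V = f j := by
  refine ⟨fun hV => ?_, ?_⟩
  · induction hV with
    | basic s hs => exact Or.inr hs
    | univ => exact Or.inr ⟨0, h0.symm⟩
    | inter s t _ _ hs ht =>
      rcases hs with rfl | ⟨j, rfl⟩
      · exact Or.inl (empty_inter t)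
      rcases ht with rfl | ⟨k, rfl⟩
      · exact Or.inl (inter_empty _)
      refine Or.inr ⟨max j k, ?_⟩
      rcases le_total j k with h | h
      · rw [max_eq_right h, inter_eq_right.2 (hf h)]
      · rw [max_eq_left h, inter_eq_left.2 (hf h)]
    | sUnion S _ hS =>
      classical
      by_cases hne : ∃ j, f j ∈ S
      · refine Or.inr ⟨Nat.find hne, subset_antisymm (sUnion_subset fun t ht => ?_)
          (subset_sUnion_of_mem (Nat.find_spec hne))⟩
        rcases hS t ht with rfl | ⟨j, rfl⟩
        · exact empty_subset _
        · exact hf (Nat.find_min' hne ht)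
      · refine Or.inl (sUnion_eq_empty.2 fun t ht => ?_)
        rcases hS t ht with h | ⟨j, rfl⟩
        · exact h
        · exact absurd ⟨j, ht⟩ hne
  · rintro (rfl | ⟨j, rfl⟩)
    · exact @isOpen_empty _ (generateFrom _)
    · exact isOpen_generateFrom_of_mem ⟨j, rfl⟩

variable [TopologicalSpace X]

theorem SpectralSpace.isSpectralSpace [SpectralSpace X] : IsSpectralSpace X :=
  ⟨inferInstance, inferInstance, QuasiSeparatedSpace.inter_isCompact,
    PrespectralSpace.isTopologicalBasis, inferInstance⟩

theorem limitPts_singleton (a : X) : limitPts {a} = closure {a} \ {a} := by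
  ext x
  by_cases hx : x = a
  · subst hx
    simp [limitPts]
  · have : ({a} : Set X) \ {x} = {a} := sdiff_singleton_eq_self hx
    simp [limitPts, this, hx]

theorem limitPts_univ_of_forall_not_isOpen (h : ∀ x : X, ¬IsOpen ({x} : Set X)) :
    limitPts (univ : Set X) = univ :=
  eq_univ_of_forall fun x => by
    show x ∈ closure (univ \ {x})
    rw [← compl_eq_univ_sdiff, (dense_compl_singleton_iff_not_open.2 (h x)).closure_eq]
    exact mem_univ x

end

namespace SeqPt

theorem inf_mem_U (j : ℕ) : inf ∈ U j := Or.inl rfl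

@[simp]
theorem fin_mem_U {i j : ℕ} : fin i ∈ U j ↔ j ≤ i := by simp [U]

theorem U_antitone : Antitone U := by
  intro j k h x hx
  rcases x with i | _
  · exact fin_mem_U.2 (h.trans (fin_mem_U.1 hx))
  · exact inf_mem_U j

theorem U_zero : U 0 = univ :=
  eq_univ_of_forall fun x => by cases x <;> simp [inf_mem_U]

theorem isOpen_iff {V : Set SeqPt} : IsOpen V ↔ V = ∅ ∨ ∃ j, V = U j :=
  isOpen_generateFrom_antitone_iff U_antitone U_zero

theorem isOpen_U (j : ℕ) : IsOpen (U j) := isOpen_iff.2 (Or.inr ⟨j, rfl⟩)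

theorem U_subset_of_fin_mem {V : Set SeqPt} (hV : IsOpen V) {j : ℕ} (hj : fin j ∈ V) :
    U j ⊆ V := by
  rcases isOpen_iff.1 hV with rfl | ⟨k, rfl⟩
  · exact absurd hj (notMem_empty _)
  · exact U_antitone (fin_mem_U.1 hj)

theorem inf_mem_of_isOpen {V : Set SeqPt} (hV : IsOpen V) (hne : V.Nonempty) : inf ∈ V := by
  rcases isOpen_iff.1 hV with rfl | ⟨k, rfl⟩
  · exact absurd hne not_nonempty_empty
  · exact inf_mem_U k

theorem inf_specializes (x : SeqPt) : inf ⤳ x :=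
  specializes_iff_forall_open.2 fun _ hV hx => inf_mem_of_isOpen hV ⟨x, hx⟩

theorem fin_specializes_fin {m n : ℕ} (h : m ≤ n) : fin n ⤳ fin m :=
  specializes_iff_forall_open.2 fun _ hV hm => U_subset_of_fin_mem hV hm (fin_mem_U.2 h)

theorem closure_singleton_inf : closure {inf} = univ :=
  eq_univ_of_forall fun x => (inf_specializes x).mem_closure

theorem closure_singleton_fin (n : ℕ) : closure {fin n} = (U (n + 1))ᶜ := by
  refine subset_antisymm (closure_minimal (by simp) (isOpen_U _).isClosed_compl) fun x hx => ?_
  rcases x with m | _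
  · exact (fin_specializes_fin (by simpa [Nat.lt_succ_iff] using hx)).mem_closure
  · exact absurd (inf_mem_U _) hx

theorem nhdsKer_singleton_fin (j : ℕ) : nhdsKer {fin j} = U j :=
  subset_antisymm ((isOpen_U j).nhdsKer_subset.2 (by simp))
    (subset_nhdsKer_iff.2 fun _ hV hj => U_subset_of_fin_mem hV (hj rfl))

instance : NoetherianSpace SeqPt :=
  (noetherianSpace_iff_opens _).2 fun V => by
    rcases isOpen_iff.1 V.isOpen with h | ⟨j, h⟩
    · rw [h]; exact isCompact_empty
    · rw [h, ← nhdsKer_singleton_fin]; exact isCompact_singleton.nhdsKer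

theorem eq_of_forall_mem_U_iff {x y : SeqPt} (h : ∀ j, x ∈ U j ↔ y ∈ U j) : x = y := by
  rcases x with m | _ <;> rcases y with n | _
  · have hm := h m
    have hn := h n
    simp only [fin_mem_U, le_refl, true_iff, iff_true] at hm hn
    rw [le_antisymm hn hm]
  · simpa using (h (m + 1)).2 (inf_mem_U _)
  · simpa using (h (n + 1)).1 (inf_mem_U _)
  · rfl

instance : T0Space SeqPt :=
  (t0Space_iff_inseparable SeqPt).2 fun _ _ h =>
    eq_of_forall_mem_U_iff fun j => inseparable_iff_forall_isOpen.1 h _ (isOpen_U j)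

instance : QuasiSober SeqPt where
  sober {s} hirr hs := by
    rcases isOpen_iff.1 hs.isOpen_compl with h | ⟨j, h⟩
    · exact ⟨inf, by rw [IsGenericPoint, closure_singleton_inf, ← compl_compl s, h, compl_empty]⟩
    · rcases j with _ | n
      · rw [U_zero, compl_eq_comm, compl_univ, eq_comm] at h
        exact absurd h hirr.nonempty.ne_empty
      · exact ⟨fin n, by rw [IsGenericPoint, closure_singleton_fin, ← h, compl_compl]⟩

instance : SpectralSpace SeqPt where

theorem not_isOpen_singleton (x : SeqPt) : ¬IsOpen ({x} : Set SeqPt) := fun hx => by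
  rcases isOpen_iff.1 hx with h | ⟨j, h⟩
  · exact singleton_ne_empty x h
  · have hfin : fin j ∈ ({x} : Set SeqPt) := h ▸ fin_mem_U.2 le_rfl
    have hinf : inf ∈ ({x} : Set SeqPt) := h ▸ inf_mem_U j
    nomatch (eq_of_mem_singleton hfin).trans (eq_of_mem_singleton hinf).symm

end SeqPt

/-- The space `X` with points `x_i (i ∈ ℕ ∪ {∞})` and nonempty opens `U_j = {x_i : j ≤ i}`
is a noetherian spectral space in which `x_∞` is a limit point of its own closure,
`L({x_∞}) = X ∖ {x_∞}` is not closed, and `L(closure {x_∞}) = X ≠ L({x_∞})`. -/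
theorem seqPt_spectral_not_atomlike :
    (TopologicalSpace.NoetherianSpace SeqPt ∧ ∀ S : Set SeqPt, IsCompact S) ∧
    IsSpectralSpace SeqPt ∧
    (SeqPt.inf ∈ limitPts (closure {SeqPt.inf}) ∧
      limitPts {SeqPt.inf} = {SeqPt.inf}ᶜ ∧
      ¬ IsClosed (limitPts {SeqPt.inf}) ∧
      limitPts (closure {SeqPt.inf}) = Set.univ ∧
      limitPts (closure {SeqPt.inf}) ≠ limitPts {SeqPt.inf}) := by
  have hL_inf : limitPts {SeqPt.inf} = {SeqPt.inf}ᶜ := by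
    rw [limitPts_singleton, SeqPt.closure_singleton_inf, compl_eq_univ_sdiff]
  have hL_cl : limitPts (closure {SeqPt.inf}) = univ := by
    rw [SeqPt.closure_singleton_inf]
    exact limitPts_univ_of_forall_not_isOpen SeqPt.not_isOpen_singleton
  refine ⟨⟨inferInstance, NoetherianSpace.isCompact⟩, SpectralSpace.isSpectralSpace,
    hL_cl ▸ mem_univ _, hL_inf, ?_, hL_cl, ?_⟩
  · rw [hL_inf, isClosed_compl_iff]
    exact SeqPt.not_isOpen_singleton _
  · rw [hL_cl, hL_inf]
    exact (compl_ne_univ.2 (singleton_nonempty _)).symm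
end
end

section
/- Let X be a topological space in which no point is a limit point of its own closure, i.e. x ∉ closure( closure({x}) ∖ {x} ) for all x ∈ X. Then for every subset S ⊆ X, the set L(S) of limit points of S is a closed subset of X. -/
/-!
Write `A'` for the derived set of `A`. By hypothesis every `x` has a punctured neighbourhood
disjoint from `closure {x}`. So if `x ∈ (closure A)'`, points of `closure A` accumulating at `x`
lie in the open set `(closure {x})ᶜ`, hence in `closure (A \ closure {x})`; therefore
`x ∈ closure (A \ closure {x}) ⊆ closure (A \ {x})`, i.e. `(closure A)' = A'`, exactly as in a
T₁ space. Then `A'' ⊆ (closure A)' = A'`, so `A'` is closed.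
-/

noncomputable section

open Filter Set Topology

section DerivedSet

variable {X : Type*} [TopologicalSpace X]

theorem mem_derivedSet_iff_mem_closure_diff_singleton {A : Set X} {x : X} :
    x ∈ derivedSet A ↔ x ∈ closure (A \ {x}) := by
  rw [mem_derivedSet, accPt_principal_iff_clusterPt, mem_closure_iff_clusterPt]

theorem limitPts_eq_derivedSet (A : Set X) : limitPts A = derivedSet A := by
  ext x
  exact mem_derivedSet_iff_mem_closure_diff_singleton.symm

theorem derivedSet_closure_of_notMem_derivedSet_closure_singleton
    (hX : ∀ x : X, x ∉ derivedSet (closure {x})) (A : Set X) :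
    derivedSet (closure A) = derivedSet A := by
  refine (derivedSet_mono _ _ subset_closure).antisymm' fun x hx => ?_
  have hfar : ∀ᶠ y in 𝓝[≠] x, y ∉ closure {x} := by
    simpa only [mem_derivedSet, accPt_iff_frequently_nhdsNE, not_frequently] using hX x
  have hfreq : ∃ᶠ y in 𝓝 x, y ∈ closure (A \ closure {x}) := by
    refine ((accPt_iff_frequently_nhdsNE.mp hx).and_eventually hfar).filter_mono
      nhdsWithin_le_nhds |>.mono fun y ⟨hyA, hyx⟩ => ?_
    rw [sdiff_eq, inter_comm]
    exact isClosed_closure.isOpen_compl.inter_closure ⟨hyx, hyA⟩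
  rw [← mem_closure_iff_frequently, closure_closure] at hfreq
  rw [mem_derivedSet_iff_mem_closure_diff_singleton]
  exact closure_mono (sdiff_subset_sdiff_right subset_closure) hfreq

theorem isClosed_derivedSet_of_notMem_derivedSet_closure_singleton
    (hX : ∀ x : X, x ∉ derivedSet (closure {x})) (A : Set X) :
    IsClosed (derivedSet A) := by
  rw [isClosed_iff_derivedSet_subset]
  exact (derivedSet_mono _ _ (derivedSet_subset_closure A)).trans
    (derivedSet_closure_of_notMem_derivedSet_closure_singleton hX A).le

end DerivedSet

/-- If no point of a topological space is a limit point of its own closure, then the set of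
limit points of any subset is closed. -/
theorem limitPts_isClosed {X : Type*} [TopologicalSpace X]
    (hX : ∀ x : X, x ∉ closure (closure {x} \ {x})) (S : Set X) :
    IsClosed (limitPts S) := by
  have hX' : ∀ x : X, x ∉ derivedSet (closure {x}) := fun x => by
    rw [mem_derivedSet_iff_mem_closure_diff_singleton]
    exact hX x
  rw [limitPts_eq_derivedSet]
  exact isClosed_derivedSet_of_notMem_derivedSet_closure_singleton hX' S

end
end

section
/- Let X be a topological space in which no point is a limit point of its own closure, i.e. x ∉ closure( closure({x}) ∖ {x} ) for all x ∈ X. Then for every subset S ⊆ X one has L(closure(S)) = L(S). -/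
/-!
Away from `x`, the closure of `S` adds to the closure of `S \ {x}` only points of
`closure {x} \ {x}`. Hence a limit point `x` of `closure S` lies in the closure of `S \ {x}`
or in the closure of `closure {x} \ {x}`, and the hypothesis rules out the second option.
-/

noncomputable section

section

variable {X : Type*} [TopologicalSpace X]

theorem limitPts_mono {S T : Set X} (h : S ⊆ T) : limitPts S ⊆ limitPts T :=
  fun _ hx => closure_mono (Set.sdiff_subset_sdiff_left h) hx

theorem closure_diff_singleton_subset (S : Set X) (x : X) :
    closure S \ {x} ⊆ closure (S \ {x}) ∪ (closure {x} \ {x}) := by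
  have hS : closure S ⊆ closure (S \ {x}) ∪ closure {x} := by
    rw [← closure_union]
    exact closure_mono fun y hy => by
      by_cases hyx : y = x
      · exact Or.inr hyx
      · exact Or.inl ⟨hy, hyx⟩
  rintro y ⟨hyS, hyx⟩
  rcases hS hyS with hy | hy
  · exact Or.inl hy
  · exact Or.inr ⟨hy, hyx⟩

theorem closure_closure_diff_singleton_subset (S : Set X) (x : X) :
    closure (closure S \ {x}) ⊆ closure (S \ {x}) ∪ closure (closure {x} \ {x}) := by
  calc closure (closure S \ {x})
      ⊆ closure (closure (S \ {x}) ∪ (closure {x} \ {x})) :=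
        closure_mono (closure_diff_singleton_subset S x)
    _ = closure (S \ {x}) ∪ closure (closure {x} \ {x}) := by
        rw [closure_union, closure_closure]

end

/-- If no point of a topological space is a limit point of its own closure, then a subset
and its closure have the same limit points. -/
theorem limitPts_closure {X : Type*} [TopologicalSpace X]
    (hX : ∀ x : X, x ∉ closure (closure {x} \ {x})) (S : Set X) :
    limitPts (closure S) = limitPts S := by
  refine Set.Subset.antisymm (fun x hx => ?_) (limitPts_mono subset_closure)
  exact (closure_closure_diff_singleton_subset S x hx).resolve_right (hX x)

end
end
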